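/- With t_0 = g_1, t_1 = (g_0+g_2)/2, t_i = g_{i+1}/2 (i ≥ 2) built from the Grünwald–Letnikov coefficients for 1 < α < 2, the symmetric Toeplitz matrix T_0 = [t_{|j-k|}] is negative semidefinite for every size; equivalently −T_0 is positive semidefinite. -/

import Mathlib

/-- Grünwald–Letnikov coefficients: g 0 = 1, g (k+1) = -((α - k)/(k+1)) * g k. -/
noncomputable def glCoeff (α : ℝ) : ℕ → ℝ
  | 0 => 1
  | k + 1 => -((α - k) / (k + 1)) * glCoeff α k

/-- The symbol coefficients t_0 = g_1, t_1 = (g_0+g_2)/2, t_i = g_{i+1}/2 for i ≥ 2. -/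
noncomputable def tCoeff (α : ℝ) : ℕ → ℝ
  | 0 => glCoeff α 1
  | 1 => (glCoeff α 0 + glCoeff α 2) / 2
  | i + 2 => glCoeff α (i + 3) / 2

/-- The symmetric Toeplitz matrix T_0 = [t_{|j-k|}]. -/
noncomputable def T0 (α : ℝ) (m : ℕ) : Matrix (Fin m) (Fin m) ℝ :=
  Matrix.of fun j k => tCoeff α ((j : ℤ) - (k : ℤ)).natAbs

/-!
`-T0 α m` is symmetric with diagonal `α` and off-diagonal entries `-t_d` (`d ≥ 1`), and it is
weakly diagonally dominant, so Gershgorin's theorem puts its eigenvalues in `[0, ∞)`.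
The partial sums `S_n = ∑_{k ≤ n} g_k` satisfy `S_{n+1} = (n + 1 - α)/(n + 1) · S_n`, hence
`S_n < 0` for `n ≥ 1` when `1 < α < 2`, and `g_{n+1} = -α/(n + 1) · S_n > 0`. So `t_d > 0` for
`d ≥ 1`, and each off-diagonal row sum is at most `2 ∑_{d=1}^{m-1} t_d = α + S_m ≤ α`.
-/

open Finset

theorem Matrix.posSemidef_of_sum_abs_le_diag {n : Type*} [Fintype n] [DecidableEq n]
    {A : Matrix n n ℝ} (hA : A.IsHermitian)
    (hdom : ∀ i, ∑ j ∈ univ.erase i, |A i j| ≤ A i i) : A.PosSemidef := by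
  refine hA.posSemidef_iff_eigenvalues_nonneg.mpr fun i => ?_
  rw [Pi.zero_apply]
  have hμ : Module.End.HasEigenvalue (Matrix.toLin' A) (hA.eigenvalues i) :=
    Module.End.hasEigenvalue_iff_mem_spectrum.mpr
      ((Matrix.spectrum_toLin' A).symm ▸ hA.eigenvalues_mem_spectrum_real i)
  obtain ⟨k, hk⟩ := eigenvalue_mem_ball hμ
  rw [Metric.mem_closedBall, Real.dist_eq] at hk
  simp only [Real.norm_eq_abs] at hk
  linarith [(abs_le.mp hk).1, hdom k]

theorem Finset.sum_comp_le_sum_of_injOn {ι κ : Type*} {s : Finset ι} {t : Finset κ}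
    {f : κ → ℝ} {g : ι → κ} (hf : ∀ k ∈ t, 0 ≤ f k) (hg : Set.InjOn g s)
    (hst : ∀ i ∈ s, g i ∈ t) : ∑ i ∈ s, f (g i) ≤ ∑ k ∈ t, f k := by
  classical
  rw [← sum_image hg]
  exact sum_le_sum_of_subset_of_nonneg (image_subset_iff.mpr hst) fun k hk _ => hf k hk

theorem Fin.sum_erase_comp_natAbs_sub_le {m : ℕ} (f : ℕ → ℝ) (hf : ∀ d, 0 ≤ f d) (i : Fin m) :
    ∑ j ∈ univ.erase i, f ((i : ℤ) - j).natAbs ≤ 2 * ∑ d ∈ Icc 1 (m - 1), f d := by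
  have hsplit : univ.erase i = univ.filter (· < i) ∪ univ.filter (i < ·) := by
    ext j
    simp only [mem_erase, mem_union, mem_filter, mem_univ, and_true, true_and]
    exact ne_iff_lt_or_gt
  have hdisj : Disjoint (univ.filter (· < i)) (univ.filter (i < ·)) :=
    disjoint_filter.mpr fun j _ h h' => lt_asymm h h'
  have hhalf (s : Finset (Fin m)) (hne : ∀ j ∈ s, j ≠ i)
      (hinj : Set.InjOn (fun j : Fin m => ((i : ℤ) - j).natAbs) s) :
      ∑ j ∈ s, f ((i : ℤ) - j).natAbs ≤ ∑ d ∈ Icc 1 (m - 1), f d := by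
    refine sum_comp_le_sum_of_injOn (fun d _ => hf d) hinj fun j hj => ?_
    have := Fin.val_ne_of_ne (hne j hj)
    simp only [mem_Icc]
    omega
  rw [hsplit, sum_union hdisj, two_mul]
  gcongr
  · refine hhalf _ (fun j hj => (mem_filter.mp hj).2.ne) fun j hj k hk h => ?_
    simp only [coe_filter, mem_univ, true_and, Set.mem_ofPred_eq, Fin.lt_def] at hj hk h
    ext; omega
  · refine hhalf _ (fun j hj => (mem_filter.mp hj).2.ne') fun j hj k hk h => ?_
    simp only [coe_filter, mem_univ, true_and, Set.mem_ofPred_eq, Fin.lt_def] at hj hk h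
    ext; omega

noncomputable def glPartialSum (α : ℝ) (n : ℕ) : ℝ := ∑ k ∈ range (n + 1), glCoeff α k

section GrunwaldLetnikov

variable {α : ℝ}

theorem glPartialSum_succ_eq_add (α : ℝ) (n : ℕ) :
    glPartialSum α (n + 1) = glPartialSum α n + glCoeff α (n + 1) :=
  sum_range_succ _ _

theorem glCoeff_succ_eq_mul_glPartialSum (α : ℝ) (n : ℕ) :
    glCoeff α (n + 1) = -α / (n + 1) * glPartialSum α n := by
  induction n with
  | zero => simp [glCoeff, glPartialSum]
  | succ n ih =>
    rw [glPartialSum_succ_eq_add, glCoeff, ih]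
    push_cast
    field_simp
    ring

theorem glPartialSum_succ (α : ℝ) (n : ℕ) :
    glPartialSum α (n + 1) = (n + 1 - α) / (n + 1) * glPartialSum α n := by
  rw [glPartialSum_succ_eq_add, glCoeff_succ_eq_mul_glPartialSum]
  field_simp
  ring

theorem glPartialSum_neg (hα1 : 1 < α) (hα2 : α < 2) {n : ℕ} (hn : 1 ≤ n) :
    glPartialSum α n < 0 := by
  induction n, hn using Nat.le_induction with
  | base => simpa [glPartialSum, sum_range_succ, glCoeff] using hα1
  | succ n hn ih =>
    rw [glPartialSum_succ]
    have : (1 : ℝ) ≤ n := by exact_mod_cast hn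
    exact mul_neg_of_pos_of_neg (div_pos (by linarith) (by positivity)) ih

theorem glCoeff_pos (hα1 : 1 < α) (hα2 : α < 2) {n : ℕ} (hn : 2 ≤ n) : 0 < glCoeff α n := by
  obtain ⟨n, rfl⟩ := Nat.exists_eq_add_of_le' hn
  rw [glCoeff_succ_eq_mul_glPartialSum]
  exact mul_pos_of_neg_of_neg (div_neg_of_neg_of_pos (by linarith) (by positivity))
    (glPartialSum_neg hα1 hα2 (by omega))

theorem tCoeff_zero (α : ℝ) : tCoeff α 0 = -α := by
  simp [tCoeff, glCoeff]

theorem tCoeff_pos (hα1 : 1 < α) (hα2 : α < 2) {d : ℕ} (hd : 1 ≤ d) : 0 < tCoeff α d := by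
  match d, hd with
  | 1, _ => exact half_pos (add_pos one_pos (glCoeff_pos hα1 hα2 le_rfl))
  | i + 2, _ => exact half_pos (glCoeff_pos hα1 hα2 (by omega))

theorem two_mul_sum_tCoeff (α : ℝ) {N : ℕ} (hN : 1 ≤ N) :
    2 * ∑ d ∈ Icc 1 N, tCoeff α d = α + glPartialSum α (N + 1) := by
  induction N, hN using Nat.le_induction with
  | base =>
    rw [Icc_self, sum_singleton, glPartialSum, sum_range_succ, sum_range_succ, sum_range_one]
    simp only [tCoeff, glCoeff]
    ring
  | succ N hN ih =>
    obtain ⟨N, rfl⟩ := Nat.exists_eq_add_of_le' hN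
    rw [sum_Icc_succ_top (by omega), mul_add, ih, glPartialSum_succ_eq_add α (N + 2), tCoeff]
    ring

theorem two_mul_sum_tCoeff_le (hα1 : 1 < α) (hα2 : α < 2) (N : ℕ) :
    2 * ∑ d ∈ Icc 1 N, tCoeff α d ≤ α := by
  rcases N.eq_zero_or_pos with rfl | hN
  · simpa using (zero_lt_one.trans hα1).le
  · rw [two_mul_sum_tCoeff α hN]
    linarith [glPartialSum_neg hα1 hα2 (n := N + 1) (by omega)]

end GrunwaldLetnikov

theorem T0_neg_semidef (α : ℝ) (hα1 : 1 < α) (hα2 : α < 2) (m : ℕ) :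
    Matrix.PosSemidef (-(T0 α m)) := by
  have hsymm : (T0 α m).IsHermitian := by
    ext j k
    simp only [Matrix.conjTranspose_apply, star_trivial, T0, Matrix.of_apply]
    rw [← Int.natAbs_neg, neg_sub]
  refine Matrix.posSemidef_of_sum_abs_le_diag hsymm.neg fun i => ?_
  calc ∑ j ∈ univ.erase i, |(-T0 α m) i j|
      = ∑ j ∈ univ.erase i, |tCoeff α ((i : ℤ) - j).natAbs| := by simp [T0]
    _ ≤ 2 * ∑ d ∈ Icc 1 (m - 1), |tCoeff α d| :=
      Fin.sum_erase_comp_natAbs_sub_le _ (fun _ => abs_nonneg _) i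
    _ = 2 * ∑ d ∈ Icc 1 (m - 1), tCoeff α d := by
      congr 1
      exact sum_congr rfl fun d hd => abs_of_pos (tCoeff_pos hα1 hα2 (mem_Icc.mp hd).1)
    _ ≤ α := two_mul_sum_tCoeff_le hα1 hα2 _
    _ = (-T0 α m) i i := by simp [T0, tCoeff_zero]
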